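/- arXiv:0901.3283 — 4 statements merged into one kernel-verified Lean document; each statement's English description precedes it below -/
import Mathlib

section
/- For any integers N ≥ 1 and 1 ≤ m ≤ N, the sum over all partitions S of {1,...,N} with exactly m blocks of the product Π_{A∈S} |A|! equals (N!/m!) · C(N-1, m-1), where C denotes the binomial coefficient. -/
/-!
Write `L(s, m)` for the sum of `∏_{A ∈ S} |A|!` over the partitions `S` of `s` into `m` blocks.
Removing a new point `a` from a partition of `s ∪ {a}` either deletes the block `{a}`, or turns a
block `B ∪ {a}` into a block `B` of a partition of `s`, dividing the weight by `|B| + 1`. Since the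
numbers `|B| + 1` add up to `|s| + m` over the blocks of a partition with `m` blocks,
`L(s ∪ {a}, m + 1) = (|s| + m + 1) L(s, m + 1) + L(s, m)`: the recursion of the Lah numbers.
Their closed form `(k + 1)! L(n + 1, k + 1) = (n + 1)! C(n, k)` then follows by induction on `n`,
using `(k + 1) C(n, k + 1) = (n - k) C(n, k)`.
-/

open Finset

variable {α : Type*} [DecidableEq α]

structure IsPartition (s : Finset α) (S : Finset (Finset α)) : Prop where
  empty_notMem : ∅ ∉ S
  pairwiseDisjoint : (S : Set (Finset α)).PairwiseDisjoint id
  biUnion_eq : S.biUnion id = s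

namespace IsPartition

variable {s : Finset α} {S : Finset (Finset α)} {A B : Finset α} {a x : α}

theorem nonempty (h : IsPartition s S) (hA : A ∈ S) : A.Nonempty :=
  nonempty_iff_ne_empty.2 fun hA0 => h.empty_notMem (hA0 ▸ hA)

theorem subset (h : IsPartition s S) (hA : A ∈ S) : A ⊆ s :=
  h.biUnion_eq ▸ subset_biUnion_of_mem id hA

theorem notMem_of_mem_of_notMem (h : IsPartition s S) (hxA : x ∈ A) (hx : x ∉ s) : A ∉ S :=
  fun hA => hx (h.subset hA hxA)

theorem eq_of_mem_of_mem (h : IsPartition s S) (hA : A ∈ S) (hB : B ∈ S) (hxA : x ∈ A)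
    (hxB : x ∈ B) : A = B :=
  h.pairwiseDisjoint.elim_finset hA hB x hxA hxB

theorem exists_mem (h : IsPartition s S) (hx : x ∈ s) : ∃ A ∈ S, x ∈ A := by
  simpa [← h.biUnion_eq] using hx

theorem sum_card (h : IsPartition s S) : ∑ A ∈ S, #A = #s := by
  rw [← h.biUnion_eq, card_biUnion h.pairwiseDisjoint, Function.id_def]

theorem sdiff_erase (h : IsPartition s S) (hA : A ∈ S) : IsPartition (s \ A) (S.erase A) where
  empty_notMem h0 := h.empty_notMem (mem_of_mem_erase h0)
  pairwiseDisjoint := h.pairwiseDisjoint.subset (by simp)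
  biUnion_eq := by
    have hdisj : Disjoint A ((S.erase A).biUnion id) :=
      (disjoint_biUnion_right _ _ _).2 fun B hB =>
        h.pairwiseDisjoint hA (mem_of_mem_erase hB) (ne_of_mem_erase hB).symm
    rw [← h.biUnion_eq, ← insert_erase hA, biUnion_insert, id,
      erase_insert (notMem_erase A S), union_sdiff_cancel_left hdisj]

theorem union_insert (h : IsPartition s S) (hA : A.Nonempty) (hAs : Disjoint A s) :
    IsPartition (A ∪ s) (insert A S) where
  empty_notMem h0 := by
    rcases mem_insert.1 h0 with h0 | h0
    · exact hA.ne_empty h0.symm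
    · exact h.empty_notMem h0
  pairwiseDisjoint := by
    rw [coe_insert]
    exact h.pairwiseDisjoint.insert fun B hB _ => hAs.mono_right (h.subset hB)
  biUnion_eq := by rw [biUnion_insert, h.biUnion_eq, id]

theorem insert_into_block (h : IsPartition s S) (ha : a ∉ s) (hB : B ∈ S) :
    IsPartition (insert a s) (insert (insert a B) (S.erase B)) := by
  have hdisj : Disjoint (insert a B) (s \ B) :=
    disjoint_insert_left.2 ⟨fun has => ha (mem_sdiff.1 has).1, disjoint_sdiff⟩
  have hs : insert a B ∪ s \ B = insert a s := by grind [h.subset hB]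
  exact hs ▸ (h.sdiff_erase hB).union_insert (insert_nonempty a B) hdisj

theorem erase_from_block (h : IsPartition (insert a s) S) (ha : a ∉ s) (hA : A ∈ S)
    (haA : a ∈ A) (hA_ne : A ≠ {a}) : IsPartition s (insert (A.erase a) (S.erase A)) := by
  have hne : (A.erase a).Nonempty := by
    rw [nonempty_iff_ne_empty, Ne, erase_eq_empty_iff, not_or]
    exact ⟨(h.nonempty hA).ne_empty, hA_ne⟩
  have hs : A.erase a ∪ (insert a s \ A) = s := by grind [h.subset hA]
  exact hs ▸ (h.sdiff_erase hA).union_insert hne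
    (disjoint_of_subset_left (erase_subset a A) disjoint_sdiff)

end IsPartition

open scoped Classical in
noncomputable def partitions (s : Finset α) : Finset (Finset (Finset α)) :=
  {S ∈ s.powerset.powerset | IsPartition s S}

theorem mem_partitions {s : Finset α} {S : Finset (Finset α)} :
    S ∈ partitions s ↔ IsPartition s S := by
  simp only [partitions, mem_filter, mem_powerset, and_iff_right_iff_imp]
  exact fun h _ hA => mem_powerset.2 (h.subset hA)

open scoped Nat

noncomputable def partitionFactorialSum (s : Finset α) (m : ℕ) : ℕ :=
  ∑ S ∈ partitions s with #S = m, ∏ A ∈ S, (#A)!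

section InsertPoint

variable {s : Finset α} {a : α}

theorem sum_partitions_insert_of_singleton_mem (ha : a ∉ s) (m : ℕ) :
    ∑ S ∈ partitions (insert a s) with #S = m + 1 ∧ {a} ∈ S, ∏ A ∈ S, (#A)! =
      partitionFactorialSum s m := by
  refine sum_nbij' (·.erase {a}) (insert {a}) ?_ ?_ ?_ ?_ ?_
  · simp only [mem_filter, mem_partitions, and_imp]
    intro S hS hcard haS
    refine ⟨?_, by rw [card_erase_of_mem haS, hcard, Nat.add_sub_cancel]⟩
    simpa [sdiff_singleton_eq_erase, erase_insert ha] using hS.sdiff_erase haS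
  · simp only [mem_filter, mem_partitions, and_imp]
    intro T hT hcard
    have haT : {a} ∉ T := hT.notMem_of_mem_of_notMem (mem_singleton_self a) ha
    refine ⟨?_, by rw [card_insert_of_notMem haT, hcard], mem_insert_self _ _⟩
    simpa [← insert_eq] using hT.union_insert (singleton_nonempty a) (disjoint_singleton_left.2 ha)
  · intro S hS
    exact insert_erase (mem_filter.1 hS).2.2
  · intro T hT
    exact erase_insert <|
      (mem_partitions.1 (mem_filter.1 hT).1).notMem_of_mem_of_notMem (mem_singleton_self a) ha
  · intro S hS
    rw [← prod_erase_mul S _ (mem_filter.1 hS).2.2, card_singleton, Nat.factorial_one, mul_one]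

theorem sum_partitions_insert_of_singleton_notMem (ha : a ∉ s) (m : ℕ) :
    ∑ S ∈ partitions (insert a s) with #S = m ∧ {a} ∉ S, ∏ A ∈ S, (#A)! =
      ∑ T ∈ partitions s with #T = m, ∑ B ∈ T, (#B + 1) * ∏ A ∈ T, (#A)! := by
  rw [sum_sigma']
  symm
  have hnew {T : Finset (Finset α)} {B : Finset α} (hT : IsPartition s T) :
      insert a B ∉ T.erase B :=
    fun h => hT.notMem_of_mem_of_notMem (mem_insert_self a B) ha (mem_of_mem_erase h)
  refine sum_nbij (fun p => insert (insert a p.2) (p.1.erase p.2)) ?_ ?_ ?_ ?_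
  · rintro ⟨T, B⟩ hp
    simp only [mem_sigma, mem_filter, mem_partitions] at hp ⊢
    obtain ⟨⟨hT, hcard⟩, hB⟩ := hp
    refine ⟨hT.insert_into_block ha hB, ?_, ?_⟩
    · rw [card_insert_of_notMem (hnew hT), card_erase_add_one hB, hcard]
    · rw [mem_insert, not_or]
      refine ⟨fun h => ?_, fun h => ?_⟩
      · obtain ⟨x, hx⟩ := hT.nonempty hB
        have hxa : x = a := mem_singleton.1 (h ▸ mem_insert_of_mem hx)
        exact ha (hT.subset hB (hxa ▸ hx))
      · exact hT.notMem_of_mem_of_notMem (mem_singleton_self a) ha (mem_of_mem_erase h)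
  · rintro ⟨T, B⟩ hp ⟨T', B'⟩ hp' heq
    dsimp only at heq
    simp only [coe_sigma, Set.mem_sigma_iff, mem_coe, mem_filter, mem_partitions] at hp hp'
    obtain ⟨⟨hT, -⟩, hB⟩ := hp
    obtain ⟨⟨hT', -⟩, hB'⟩ := hp'
    have hBB' : insert a B = insert a B' :=
      (hT.insert_into_block ha hB).eq_of_mem_of_mem (mem_insert_self _ _)
        (heq ▸ mem_insert_self _ _) (mem_insert_self a B) (mem_insert_self a B')
    obtain rfl : B = B' := by
      rw [← erase_insert (notMem_mono (hT.subset hB) ha), hBB',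
        erase_insert (notMem_mono (hT'.subset hB') ha)]
    have hTT' : T.erase B = T'.erase B := by
      rw [← erase_insert (hnew hT), heq, erase_insert (hnew hT')]
    rw [← insert_erase hB, hTT', insert_erase hB']
  · intro S hS
    simp only [mem_coe, mem_filter, mem_partitions] at hS
    obtain ⟨hS, hcard, haS⟩ := hS
    obtain ⟨A, hA, haA⟩ := hS.exists_mem (mem_insert_self a s)
    have hT := hS.erase_from_block ha hA haA (by rintro rfl; exact haS hA)
    have hB : A.erase a ∉ S.erase A := by
      intro hB
      obtain ⟨x, hx⟩ := hT.nonempty (mem_insert_self _ _)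
      have := hS.eq_of_mem_of_mem (mem_of_mem_erase hB) hA hx (mem_of_mem_erase hx)
      exact notMem_erase a A (by rwa [this])
    refine ⟨⟨insert (A.erase a) (S.erase A), A.erase a⟩, ?_, ?_⟩
    · simp only [coe_sigma, Set.mem_sigma_iff, mem_coe, mem_filter, mem_partitions]
      refine ⟨⟨hT, ?_⟩, mem_insert_self _ _⟩
      rw [card_insert_of_notMem hB, card_erase_add_one hA, hcard]
    · dsimp only
      rw [erase_insert hB, insert_erase haA, insert_erase hA]
  · rintro ⟨T, B⟩ hp
    simp only [mem_sigma, mem_filter, mem_partitions] at hp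
    obtain ⟨⟨hT, -⟩, hB⟩ := hp
    rw [prod_insert (hnew hT), card_insert_of_notMem (notMem_mono (hT.subset hB) ha),
      Nat.factorial_succ, ← mul_prod_erase T _ hB, mul_assoc]

theorem partitionFactorialSum_insert (ha : a ∉ s) (m : ℕ) :
    partitionFactorialSum (insert a s) (m + 1) =
      (#s + m + 1) * partitionFactorialSum s (m + 1) + partitionFactorialSum s m := by
  rw [partitionFactorialSum, ← sum_filter_add_sum_filter_not _ (fun S => {a} ∈ S), filter_filter,
    filter_filter, sum_partitions_insert_of_singleton_mem ha,
    sum_partitions_insert_of_singleton_notMem ha, add_comm]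
  congr 1
  rw [partitionFactorialSum, mul_sum]
  refine sum_congr rfl fun T hT => ?_
  obtain ⟨hT, hcard⟩ := mem_filter.1 hT
  rw [← sum_mul, sum_add_distrib, (mem_partitions.1 hT).sum_card, sum_const, smul_eq_mul,
    mul_one, hcard, add_assoc]

end InsertPoint

theorem partitions_empty : partitions (∅ : Finset α) = {∅} := by
  ext S
  rw [mem_partitions, mem_singleton]
  refine ⟨fun h => eq_empty_of_forall_notMem fun A hA => ?_, ?_⟩
  · exact (h.nonempty hA).ne_empty (subset_empty.1 (h.subset hA))
  · rintro rfl
    exact ⟨notMem_empty _, by simp, biUnion_empty⟩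

theorem partitionFactorialSum_zero {s : Finset α} (hs : s.Nonempty) :
    partitionFactorialSum s 0 = 0 := by
  refine sum_eq_zero fun S hS => ?_
  obtain ⟨hS, hcard⟩ := mem_filter.1 hS
  have := (mem_partitions.1 hS).biUnion_eq
  rw [card_eq_zero.1 hcard, biUnion_empty] at this
  exact absurd this.symm hs.ne_empty

namespace Nat

def lah : ℕ → ℕ → ℕ
  | 0, 0 => 1
  | 0, _ + 1 => 0
  | _ + 1, 0 => 0
  | n + 1, k + 1 => (n + k + 1) * lah n (k + 1) + lah n k

@[simp] theorem lah_zero : lah 0 0 = 1 := rfl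

@[simp] theorem lah_zero_succ (k : ℕ) : lah 0 (k + 1) = 0 := rfl

@[simp] theorem lah_succ_zero (n : ℕ) : lah (n + 1) 0 = 0 := rfl

theorem lah_succ_succ (n k : ℕ) :
    lah (n + 1) (k + 1) = (n + k + 1) * lah n (k + 1) + lah n k := rfl

theorem succ_mul_choose_succ_add_mul_choose (n k : ℕ) :
    (k + 1) * n.choose (k + 1) + k * n.choose k = n * n.choose k := by
  rcases le_or_gt k n with hkn | hnk
  · rw [mul_comm, choose_succ_right_eq, mul_comm k, ← mul_add, Nat.sub_add_cancel hkn, mul_comm]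
  · simp [choose_eq_zero_of_lt hnk, choose_eq_zero_of_lt (hnk.trans (lt_succ_self k))]

theorem factorial_mul_lah_succ_succ (n k : ℕ) :
    (k + 1)! * lah (n + 1) (k + 1) = (n + 1)! * n.choose k := by
  induction n generalizing k with
  | zero => cases k <;> simp [lah_succ_succ]
  | succ n ih =>
    rw [lah_succ_succ, factorial_succ (n + 1)]
    cases k with
    | zero =>
      have h := ih 0
      rw [choose_zero_right, mul_one] at h
      rw [lah_succ_zero, add_zero, choose_zero_right, mul_one, ← h]
      ring
    | succ j =>
      have h1 := ih j
      have h2 := ih (j + 1)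
      have h3 := succ_mul_choose_succ_add_mul_choose n j
      rw [choose_succ_succ, factorial_succ (j + 1)] at *
      zify at *
      linear_combination (↑n + ↑j + 3 : ℤ) * h2 + (↑j + 2 : ℤ) * h1 + ((n + 1)! : ℤ) * h3

theorem lah_eq_factorial_div_mul_choose {n k : ℕ} (hk : 1 ≤ k) (hkn : k ≤ n) :
    lah n k = n ! / k ! * (n - 1).choose (k - 1) := by
  obtain ⟨k, rfl⟩ : ∃ k', k = k' + 1 := ⟨k - 1, by omega⟩
  obtain ⟨n, rfl⟩ : ∃ n', n = n' + 1 := ⟨n - 1, by omega⟩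
  apply Nat.eq_of_mul_eq_mul_left (factorial_pos (k + 1))
  rw [factorial_mul_lah_succ_succ, add_tsub_cancel_right, add_tsub_cancel_right, ← mul_assoc,
    Nat.mul_div_cancel' (factorial_dvd_factorial hkn)]

end Nat

theorem partitionFactorialSum_eq_lah (s : Finset α) (m : ℕ) :
    partitionFactorialSum s m = Nat.lah #s m := by
  induction s using Finset.induction_on generalizing m with
  | empty => cases m <;> simp [partitionFactorialSum, partitions_empty, filter_singleton]
  | insert a s ha ih =>
    rw [card_insert_of_notMem ha]
    cases m with
    | zero => exact partitionFactorialSum_zero (insert_nonempty a s)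
    | succ m => rw [partitionFactorialSum_insert ha, ih, ih, Nat.lah_succ_succ]

theorem isPartition_univ_iff [Fintype α] {S : Finset (Finset α)} :
    IsPartition univ S ↔ ∅ ∉ S ∧ ∀ x, ∃! A, A ∈ S ∧ x ∈ A := by
  refine ⟨fun h => ⟨h.empty_notMem, fun x => ?_⟩, fun ⟨h0, huniq⟩ => ⟨h0, ?_, ?_⟩⟩
  · obtain ⟨A, hA, hxA⟩ := h.exists_mem (mem_univ x)
    exact ⟨A, ⟨hA, hxA⟩, fun B ⟨hB, hxB⟩ => h.eq_of_mem_of_mem hB hA hxB hxA⟩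
  · exact fun A hA B hB hAB =>
      disjoint_left.2 fun x hxA hxB => hAB ((huniq x).unique ⟨hA, hxA⟩ ⟨hB, hxB⟩)
  · refine eq_univ_of_forall fun x => ?_
    obtain ⟨A, ⟨hA, hxA⟩, -⟩ := huniq x
    exact mem_biUnion.2 ⟨A, hA, hxA⟩

open scoped Classical in
theorem sum_partitions_prod_factorial_general (N m : ℕ) (hm1 : 1 ≤ m) (hmN : m ≤ N) :
    (∑ S : Finset (Finset (Fin N)),
        if (∅ ∉ S ∧ (∀ x : Fin N, ∃! A, A ∈ S ∧ x ∈ A) ∧ S.card = m)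
        then ∏ A ∈ S, Nat.factorial A.card else 0)
      = Nat.factorial N / Nat.factorial m * Nat.choose (N - 1) (m - 1) := by
  have h := partitionFactorialSum_eq_lah (univ : Finset (Fin N)) m
  rw [card_univ, Fintype.card_fin, Nat.lah_eq_factorial_div_mul_choose hm1 hmN] at h
  rw [← h, partitionFactorialSum, partitions, powerset_univ, powerset_univ, filter_filter,
    sum_filter]
  simp only [isPartition_univ_iff, and_assoc]

open scoped Classical in
/-- For integers `N ≥ 1` and `1 ≤ m ≤ N`, the sum over all partitions `S` of `{1,…,N}`
with exactly `m` blocks of `∏_{A ∈ S} |A|!` equals `(N!/m!) · C(N-1, m-1)`. -/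
theorem sum_partitions_prod_factorial (N m : ℕ) (hN : 1 ≤ N) (hm1 : 1 ≤ m) (hmN : m ≤ N) :
    (∑ S : Finset (Finset (Fin N)),
        if (∅ ∉ S ∧ (∀ x : Fin N, ∃! A, A ∈ S ∧ x ∈ A) ∧ S.card = m)
        then ∏ A ∈ S, Nat.factorial A.card else 0)
      = Nat.factorial N / Nat.factorial m * Nat.choose (N - 1) (m - 1) :=
  sum_partitions_prod_factorial_general N m hm1 hmN
end

section
/- Let c₀ > 0 and suppose that for each finite index set A a weight w(A) ≥ 0 is given with w(A) ≤ c₀^{|A|} |A|!. Then there is a constant c (one may take c = c₀ e) such that for all N ≥ 1, Σ_{S ∈ π'(I_N)} Π_{A∈S} (c₀^{|A|} |A|!) ≤ c^N N!, where π'(I_N) is the set of partitions of {1,...,N} all of whose blocks have size at least 2. -/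
/-!
Removing the block `C` that contains a fixed point `x` identifies the partitions of `s` with the
pairs (`C ∋ x`, partition of `s \ C`). For block weights `0 ≤ w A ≤ c^|A| |A|!` and
`|s| = k + 1`, induction bounds the contribution of the blocks `C` of size `m + 1` by
`C(k, m) c^(m+1) (m+1)! (c e)^(k-m) (k-m)! = (m + 1) e^(-m) · c^(k+1) e^k k! ≤ c^(k+1) e^k k!`,
since `m + 1 ≤ e^m`; summing over the `k + 1` values of `m` gives `(c e)^(k+1) (k+1)!`.
Forbidding singletons only sets their weight to `0`, so it plays no role in the bound.
-/

open Finset Nat Real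

variable {ι : Type*}

open scoped Classical in
noncomputable def setPartitions (s : Finset ι) : Finset (Finset (Finset ι)) :=
  s.powerset.powerset.filter fun S => ∅ ∉ S ∧ ∀ x ∈ s, ∃! A, A ∈ S ∧ x ∈ A

section setPartitions

variable {s A B C : Finset ι} {S T : Finset (Finset ι)} {x : ι}

theorem mem_setPartitions :
    S ∈ setPartitions s ↔ (∀ A ∈ S, A ⊆ s) ∧ ∅ ∉ S ∧ ∀ x ∈ s, ∃! A, A ∈ S ∧ x ∈ A := by
  simp only [setPartitions, mem_filter, mem_powerset, subset_iff (s₁ := S)]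

theorem subset_of_mem_setPartitions (hS : S ∈ setPartitions s) (hA : A ∈ S) : A ⊆ s :=
  (mem_setPartitions.1 hS).1 A hA

theorem eq_of_mem_of_mem_setPartitions (hS : S ∈ setPartitions s) (hA : A ∈ S) (hB : B ∈ S)
    (hxA : x ∈ A) (hxB : x ∈ B) : A = B :=
  ((mem_setPartitions.1 hS).2.2 x (subset_of_mem_setPartitions hS hA hxA)).unique
    ⟨hA, hxA⟩ ⟨hB, hxB⟩

theorem setPartitions_empty : setPartitions (∅ : Finset ι) = {∅} := by
  ext S
  simp only [mem_setPartitions, subset_empty, mem_singleton, notMem_empty, IsEmpty.forall_iff,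
    implies_true, and_true]
  constructor
  · rintro ⟨hS, h0⟩
    exact eq_empty_of_forall_notMem fun A hA => h0 (hS A hA ▸ hA)
  · rintro rfl
    simp

variable [DecidableEq ι]

theorem disjoint_of_mem_setPartitions_sdiff (hT : T ∈ setPartitions (s \ C)) (hA : A ∈ T) :
    Disjoint A C :=
  disjoint_of_subset_left (subset_of_mem_setPartitions hT hA) sdiff_disjoint

theorem notMem_setPartitions_sdiff (hT : T ∈ setPartitions (s \ C)) (hC : C.Nonempty) :
    C ∉ T := fun hCT =>
  hC.ne_empty (disjoint_self.1 (disjoint_of_mem_setPartitions_sdiff hT hCT))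

theorem insert_mem_setPartitions (hC : C.Nonempty) (hCs : C ⊆ s)
    (hT : T ∈ setPartitions (s \ C)) : insert C T ∈ setPartitions s := by
  obtain ⟨hTs, hT0, hTcover⟩ := mem_setPartitions.1 hT
  refine mem_setPartitions.2 ⟨?_, ?_, fun y hy => ?_⟩
  · simp only [mem_insert, forall_eq_or_imp]
    exact ⟨hCs, fun A hA => (hTs A hA).trans sdiff_subset⟩
  · simp only [mem_insert, not_or]
    exact ⟨hC.ne_empty.symm, hT0⟩
  by_cases hyC : y ∈ C
  · refine ⟨C, ⟨mem_insert_self C T, hyC⟩, ?_⟩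
    rintro A ⟨hA, hyA⟩
    rcases mem_insert.1 hA with rfl | hA
    · rfl
    · exact absurd hyC (disjoint_left.1 (disjoint_of_mem_setPartitions_sdiff hT hA) hyA)
  · obtain ⟨A, ⟨hA, hyA⟩, huniq⟩ := hTcover y (mem_sdiff.2 ⟨hy, hyC⟩)
    refine ⟨A, ⟨mem_insert_of_mem hA, hyA⟩, ?_⟩
    rintro A' ⟨hA', hyA'⟩
    rcases mem_insert.1 hA' with rfl | hA'
    · exact absurd hyA' hyC
    · exact huniq A' ⟨hA', hyA'⟩

theorem erase_mem_setPartitions (hS : S ∈ setPartitions s) (hC : C ∈ S) :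
    S.erase C ∈ setPartitions (s \ C) := by
  obtain ⟨-, hS0, hScover⟩ := mem_setPartitions.1 hS
  refine mem_setPartitions.2
    ⟨fun A hA y hyA => ?_, fun h => hS0 (mem_of_mem_erase h), fun y hy => ?_⟩
  · obtain ⟨hAC, hA⟩ := mem_erase.1 hA
    exact mem_sdiff.2 ⟨subset_of_mem_setPartitions hS hA hyA,
      fun hyC => hAC (eq_of_mem_of_mem_setPartitions hS hA hC hyA hyC)⟩
  · obtain ⟨hys, hyC⟩ := mem_sdiff.1 hy
    obtain ⟨A, ⟨hA, hyA⟩, huniq⟩ := hScover y hys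
    refine ⟨A, ⟨mem_erase.2 ⟨?_, hA⟩, hyA⟩,
      fun A' ⟨hA', hyA'⟩ => huniq A' ⟨mem_of_mem_erase hA', hyA'⟩⟩
    rintro rfl
    exact hyC hyA

theorem eq_and_eq_of_insert_eq_insert_of_mem_setPartitions {C₁ C₂ : Finset ι}
    {T₁ T₂ : Finset (Finset ι)}
    (hT₁ : T₁ ∈ setPartitions (s \ C₁)) (hT₂ : T₂ ∈ setPartitions (s \ C₂))
    (hx₁ : x ∈ C₁) (hx₂ : x ∈ C₂) (h : insert C₁ T₁ = insert C₂ T₂) : C₁ = C₂ ∧ T₁ = T₂ := by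
  obtain rfl : C₁ = C₂ := by
    by_contra hne
    have hC₂ : C₂ ∈ T₁ := (mem_insert.1 (h ▸ mem_insert_self C₂ T₂)).resolve_left (Ne.symm hne)
    exact disjoint_left.1 (disjoint_of_mem_setPartitions_sdiff hT₁ hC₂) hx₂ hx₁
  refine ⟨rfl, ?_⟩
  rw [← erase_insert (notMem_setPartitions_sdiff hT₁ ⟨x, hx₁⟩), h,
    erase_insert (notMem_setPartitions_sdiff hT₂ ⟨x, hx₁⟩)]

end setPartitions

section partitionSum

variable {R : Type*} [CommSemiring R]

noncomputable def partitionSum (w : Finset ι → R) (s : Finset ι) : R :=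
  ∑ S ∈ setPartitions s, ∏ A ∈ S, w A

theorem partitionSum_empty (w : Finset ι → R) : partitionSum w ∅ = 1 := by
  simp [partitionSum, setPartitions_empty]

theorem partitionSum_eq_sum_powerset_erase [DecidableEq ι] (w : Finset ι → R) {s : Finset ι}
    {x : ι} (hx : x ∈ s) :
    partitionSum w s =
      ∑ B ∈ (s.erase x).powerset, w (insert x B) * partitionSum w (s \ insert x B) := by
  have hblock : ∀ {B}, B ∈ (s.erase x).powerset → insert x B ⊆ s := fun hB =>
    insert_subset hx ((mem_powerset.1 hB).trans (erase_subset x s))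
  have hxB : ∀ {B}, B ∈ (s.erase x).powerset → x ∉ B := fun hB hxB =>
    notMem_erase x s (mem_powerset.1 hB hxB)
  simp_rw [partitionSum, mul_sum]
  rw [sum_sigma']
  refine (sum_bij (fun p _ => insert (insert x p.1) p.2) ?_ ?_ ?_ ?_).symm
  · rintro ⟨B, T⟩ hp
    obtain ⟨hB, hT⟩ := mem_sigma.1 hp
    exact insert_mem_setPartitions (insert_nonempty x B) (hblock hB) hT
  · rintro ⟨B₁, T₁⟩ hp₁ ⟨B₂, T₂⟩ hp₂ h
    simp only [mem_sigma] at hp₁ hp₂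
    obtain ⟨hB₁, hT₁⟩ := hp₁
    obtain ⟨hB₂, hT₂⟩ := hp₂
    obtain ⟨hC, rfl⟩ := eq_and_eq_of_insert_eq_insert_of_mem_setPartitions hT₁ hT₂
      (mem_insert_self x B₁) (mem_insert_self x B₂) h
    obtain rfl : B₁ = B₂ := by rw [← erase_insert (hxB hB₁), hC, erase_insert (hxB hB₂)]
    rfl
  · intro S hS
    obtain ⟨C, ⟨hC, hxC⟩, -⟩ := (mem_setPartitions.1 hS).2.2 x hx
    refine ⟨⟨C.erase x, S.erase C⟩, mem_sigma.2 ⟨?_, ?_⟩, ?_⟩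
    · exact mem_powerset.2 (erase_subset_erase x (subset_of_mem_setPartitions hS hC))
    · rw [insert_erase hxC]
      exact erase_mem_setPartitions hS hC
    · simp only [insert_erase hxC, insert_erase hC]
  · rintro ⟨B, T⟩ hp
    rw [prod_insert (notMem_setPartitions_sdiff (mem_sigma.1 hp).2 (insert_nonempty x B))]

end partitionSum

theorem choose_mul_factorial_mul_le {c : ℝ} (hc : 0 ≤ c) {k m : ℕ} (hm : m ≤ k) :
    k.choose m * (c ^ (m + 1) * (m + 1)!) * ((c * exp 1) ^ (k - m) * (k - m)!) ≤
      c ^ (k + 1) * exp 1 ^ k * k ! := by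
  obtain ⟨j, rfl⟩ := Nat.exists_eq_add_of_le' hm
  have hchoose : ((j + m).choose m : ℝ) * j ! * m ! = (j + m)! := by
    exact_mod_cast add_choose_mul_factorial_mul_factorial j m
  have hexp : (m : ℝ) + 1 ≤ exp 1 ^ m := by
    rw [exp_one_pow]
    exact add_one_le_exp m
  rw [Nat.add_sub_cancel, factorial_succ]
  calc _ = c ^ (j + m + 1) * exp 1 ^ j * (m + 1) * ((j + m).choose m * j ! * m !) := by
          push_cast
          ring
    _ ≤ c ^ (j + m + 1) * exp 1 ^ j * exp 1 ^ m * ((j + m).choose m * j ! * m !) := by gcongr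
    _ = _ := by
          rw [hchoose]
          ring

theorem partitionSum_nonneg {w : Finset ι → ℝ} (hw : ∀ A, 0 ≤ w A) (s : Finset ι) :
    0 ≤ partitionSum w s :=
  sum_nonneg fun _ _ => prod_nonneg fun A _ => hw A

theorem partitionSum_le [DecidableEq ι] {w : Finset ι → ℝ} {c : ℝ} (hc : 0 ≤ c)
    (hw₀ : ∀ A, 0 ≤ w A) (hw : ∀ A, w A ≤ c ^ #A * (#A)!) (s : Finset ι) :
    partitionSum w s ≤ (c * exp 1) ^ #s * (#s)! := by
  induction s using Finset.strongInduction with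
  | H s ih =>
  rcases s.eq_empty_or_nonempty with rfl | ⟨x, hx⟩
  · simp [partitionSum_empty]
  set k := #(s.erase x)
  have hk : #s = k + 1 := (card_erase_add_one hx).symm
  have hblock : ∀ B ∈ (s.erase x).powerset,
      w (insert x B) * partitionSum w (s \ insert x B) ≤
        c ^ (#B + 1) * (#B + 1)! * ((c * exp 1) ^ (k - #B) * (k - #B)!) := by
    intro B hB
    have hBs : insert x B ⊆ s := insert_subset hx ((mem_powerset.1 hB).trans (erase_subset x s))
    have hcard : #(insert x B) = #B + 1 :=
      card_insert_of_notMem fun hxB => notMem_erase x s (mem_powerset.1 hB hxB)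
    have hrest : #(s \ insert x B) = k - #B := by
      rw [card_sdiff_of_subset hBs, hcard, hk]
      omega
    rw [← hcard, ← hrest]
    exact mul_le_mul (hw _) (ih _ (sdiff_ssubset hBs (insert_nonempty x B)))
      (partitionSum_nonneg hw₀ _) (by positivity)
  calc partitionSum w s
      = ∑ B ∈ (s.erase x).powerset, w (insert x B) * partitionSum w (s \ insert x B) :=
        partitionSum_eq_sum_powerset_erase w hx
    _ ≤ ∑ B ∈ (s.erase x).powerset,
          c ^ (#B + 1) * (#B + 1)! * ((c * exp 1) ^ (k - #B) * (k - #B)!) := sum_le_sum hblock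
    _ = ∑ m ∈ range (k + 1),
          k.choose m * (c ^ (m + 1) * (m + 1)! * ((c * exp 1) ^ (k - m) * (k - m)!)) := by
        simp only [sum_powerset_apply_card
          (fun m => c ^ (m + 1) * (m + 1)! * ((c * exp 1) ^ (k - m) * (k - m)!)), nsmul_eq_mul]
        rfl
    _ ≤ ∑ m ∈ range (k + 1), c ^ (k + 1) * exp 1 ^ k * k ! := by
        refine sum_le_sum fun m hm => ?_
        rw [← mul_assoc]
        exact choose_mul_factorial_mul_le hc (Nat.lt_succ_iff.1 (mem_range.1 hm))
    _ = (c ^ (k + 1) * exp 1 ^ k * (k + 1)!) * 1 := by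
        rw [sum_const, card_range, nsmul_eq_mul, factorial_succ]
        push_cast
        ring
    _ ≤ (c ^ (k + 1) * exp 1 ^ k * (k + 1)!) * exp 1 := by
        gcongr
        exact one_le_exp zero_le_one
    _ = (c * exp 1) ^ #s * (#s)! := by
        rw [hk]
        ring

open scoped Classical in
theorem sum_partitions_no_singletons_bound_general (c₀ : ℝ) (hc₀ : 0 < c₀) (N : ℕ) :
    (∑ S : Finset (Finset (Fin N)),
        if (∅ ∉ S ∧ (∀ x : Fin N, ∃! A, A ∈ S ∧ x ∈ A) ∧ (∀ A ∈ S, 2 ≤ A.card))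
        then ∏ A ∈ S, c₀ ^ A.card * (Nat.factorial A.card : ℝ) else 0)
      ≤ (c₀ * Real.exp 1) ^ N * (Nat.factorial N : ℝ) := by
  let w : Finset (Fin N) → ℝ := fun A => if 2 ≤ #A then c₀ ^ #A * (#A)! else 0
  have hw₀ (A : Finset (Fin N)) : 0 ≤ w A := by
    dsimp only [w]
    split_ifs <;> positivity
  have hw (A : Finset (Fin N)) : w A ≤ c₀ ^ #A * (#A)! := by
    dsimp only [w]
    split_ifs
    exacts [le_rfl, by positivity]
  convert partitionSum_le hc₀.le hw₀ hw (univ : Finset (Fin N)) using 1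
  · rw [partitionSum, setPartitions, powerset_univ, powerset_univ, sum_filter]
    refine sum_congr rfl fun S _ => ?_
    simp only [w, prod_ite_zero, mem_univ, forall_const, ite_and]
    -- the two sides now differ only in their `Decidable` instances
    congr
  · rw [Finset.card_fin]

open scoped Classical in
/-- Cluster combinatorics bound: for `c₀ > 0` and `N ≥ 1`, the sum over all partitions of
`{1,…,N}` without singleton blocks of `∏_{A} c₀^{|A|} |A|!` is at most `(c₀ e)^N N!`.
(In particular any weights `w(A) ≤ c₀^{|A|}|A|!` obey the same bound.) -/
theorem sum_partitions_no_singletons_bound (c₀ : ℝ) (hc₀ : 0 < c₀) (N : ℕ) (hN : 1 ≤ N) :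
    (∑ S : Finset (Finset (Fin N)),
        if (∅ ∉ S ∧ (∀ x : Fin N, ∃! A, A ∈ S ∧ x ∈ A) ∧ (∀ A ∈ S, 2 ≤ A.card))
        then ∏ A ∈ S, c₀ ^ A.card * (Nat.factorial A.card : ℝ) else 0)
      ≤ (c₀ * Real.exp 1) ^ N * (Nat.factorial N : ℝ) :=
  sum_partitions_no_singletons_bound_general c₀ hc₀ N
end

section
/- Let a₀ > 0 and for λ ∈ (0,1) define N₀(λ) = max(1, ⌊a₀ |ln λ| / ln⟨ln λ⟩⌋), where ⟨x⟩ = √(1+x²). Let c, c' > 0, n₁, n₂, n₃ ∈ ℕ₊, p₁, p₂ ∈ ℝ be constants with p₁ - a₀(p₂ + n₁n₂ + n₃) > 0. Then c^{N₀(λ)} λ^{p₁} N₀(λ)^{p₂ N₀(λ) + c'} ((n₁ N₀(λ))!)^{n₂} ⟨ln λ⟩^{n₃ N₀(λ) + c'} → 0 as λ → 0⁺. -/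
/-!
Put `L = -log λ → ∞` and `M = log ⟨L⟩ ~ log L`. Then `N₀ ~ a₀ L / M`, so `N₀ M / L → a₀` and
`log N₀ ~ M`; hence `N₀ log N₀ / L → a₀` while `N₀ / L → 0` and `log N₀ / L → 0`. Bounding
`(n₁N₀)!` by `(n₁N₀)^(n₁N₀)`, the logarithm of the expression is at most
`-p₁ L + (p₂ + n₁n₂) N₀ log N₀ + n₃ N₀ M + o(L) = -(p₁ - a₀(p₂ + n₁n₂ + n₃)) L + o(L) → -∞`.
-/

open Filter Real Topology
open scoped Nat

/-- `log ⟨L⟩`, where `⟨L⟩ = √(1 + L²)`. -/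
noncomputable def logBracket (L : ℝ) : ℝ := log √(1 + L ^ 2)

lemma log_le_logBracket {L : ℝ} (hL : 0 < L) : log L ≤ logBracket L :=
  log_le_log hL (le_sqrt_of_sq_le (by linarith))

lemma logBracket_le_log_add_log_two {L : ℝ} (hL : 1 ≤ L) : logBracket L ≤ log L + log 2 := by
  have hsqrt : √(1 + L ^ 2) ≤ 2 * L := sqrt_le_iff.2 ⟨by linarith, by nlinarith⟩
  rw [add_comm, ← log_mul two_ne_zero (by positivity)]
  exact log_le_log (by positivity) hsqrt

lemma tendsto_logBracket_atTop : Tendsto logBracket atTop atTop :=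
  tendsto_atTop_mono' atTop (eventually_gt_atTop 0 |>.mono fun _ => log_le_logBracket)
    tendsto_log_atTop

lemma tendsto_logBracket_div_log : Tendsto (fun L => logBracket L / log L) atTop (𝓝 1) := by
  have hupper : Tendsto (fun L => 1 + log 2 * (log L)⁻¹) atTop (𝓝 1) := by
    simpa using tendsto_log_atTop.inv_tendsto_atTop.const_mul (log 2) |>.const_add 1
  refine tendsto_of_tendsto_of_tendsto_of_le_of_le' tendsto_const_nhds hupper ?_ ?_
  all_goals filter_upwards [eventually_gt_atTop 1] with L hL
  · exact (one_le_div (log_pos hL)).2 (log_le_logBracket (by linarith))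
  · rw [div_le_iff₀ (log_pos hL), add_mul, inv_mul_cancel_right₀ (log_pos hL).ne']
    linarith [logBracket_le_log_add_log_two hL.le]

lemma tendsto_logBracket_div_self : Tendsto (fun L => logBracket L / L) atTop (𝓝 0) := by
  have h := tendsto_logBracket_div_log.mul isLittleO_log_id_atTop.tendsto_div_nhds_zero
  rw [one_mul] at h
  refine h.congr' ?_
  filter_upwards [eventually_gt_atTop 1] with L hL
  simp only [id]
  rw [div_mul_div_cancel₀ (log_pos hL).ne']

lemma tendsto_log_div_logBracket : Tendsto (fun L => log L / logBracket L) atTop (𝓝 1) := by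
  simpa using tendsto_logBracket_div_log.inv₀ one_ne_zero

lemma tendsto_max_one_floor_div_self :
    Tendsto (fun x : ℝ => ((max 1 ⌊x⌋₊ : ℕ) : ℝ) / x) atTop (𝓝 1) := by
  refine tendsto_nat_floor_div_atTop.congr' ?_
  filter_upwards [eventually_ge_atTop 1] with x hx
  rw [max_eq_right (Nat.le_floor (by simpa using hx))]

/-- `N₀(λ) = expansionOrder a₀ (-log λ)`. -/
noncomputable def expansionOrder (a₀ L : ℝ) : ℕ := max 1 ⌊a₀ * L / logBracket L⌋₊

lemma expansionOrder_pos (a₀ L : ℝ) : (0 : ℝ) < expansionOrder a₀ L :=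
  Nat.cast_pos.2 (one_pos.trans_le (le_max_left _ _))

section expansionOrder

variable {a₀ : ℝ}

lemma eventually_logBracket_pos : ∀ᶠ L in atTop, 0 < logBracket L :=
  eventually_gt_atTop 1 |>.mono fun _ hL => (log_pos hL).trans_le (log_le_logBracket (by linarith))

lemma tendsto_mul_div_logBracket_atTop (ha₀ : 0 < a₀) :
    Tendsto (fun L => a₀ * L / logBracket L) atTop atTop := by
  have h : Tendsto (fun L => logBracket L / L) atTop (𝓝[>] 0) :=
    tendsto_nhdsWithin_iff.2 ⟨tendsto_logBracket_div_self, by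
      filter_upwards [eventually_logBracket_pos, eventually_gt_atTop 0] with L hM hL
      exact div_pos hM hL⟩
  refine (h.inv_tendsto_nhdsGT_zero.const_mul_atTop ha₀).congr fun L => ?_
  rw [Pi.inv_apply, inv_div, mul_div_assoc]

lemma tendsto_expansionOrder_div (ha₀ : 0 < a₀) :
    Tendsto (fun L => (expansionOrder a₀ L : ℝ) / (a₀ * L / logBracket L)) atTop (𝓝 1) :=
  tendsto_max_one_floor_div_self.comp (tendsto_mul_div_logBracket_atTop ha₀)

lemma tendsto_expansionOrder_mul_logBracket_div_self (ha₀ : 0 < a₀) :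
    Tendsto (fun L => expansionOrder a₀ L * logBracket L / L) atTop (𝓝 a₀) := by
  have h := (tendsto_expansionOrder_div ha₀).mul_const a₀
  rw [one_mul] at h
  refine h.congr' ?_
  filter_upwards [eventually_logBracket_pos, eventually_gt_atTop 0] with L hM hL
  field_simp

lemma tendsto_log_expansionOrder_div_logBracket (ha₀ : 0 < a₀) :
    Tendsto (fun L => log (expansionOrder a₀ L) / logBracket L) atTop (𝓝 1) := by
  have hM := tendsto_logBracket_atTop.inv_tendsto_atTop
  have hlogM : Tendsto (fun L => log (logBracket L) / logBracket L) atTop (𝓝 0) :=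
    isLittleO_log_id_atTop.tendsto_div_nhds_zero.comp tendsto_logBracket_atTop
  have hratio := ((tendsto_expansionOrder_div ha₀).log one_ne_zero).mul hM
  have h := ((hratio.add (hM.const_mul (log a₀))).add tendsto_log_div_logBracket).sub hlogM
  rw [log_one, zero_mul, mul_zero, zero_add, zero_add, sub_zero] at h
  refine h.congr' ?_
  filter_upwards [eventually_logBracket_pos, eventually_gt_atTop 0] with L hM hL
  have hN := expansionOrder_pos a₀ L
  rw [Pi.inv_apply, log_div hN.ne' (by positivity), log_div (by positivity) hM.ne',
    log_mul ha₀.ne' hL.ne']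
  field_simp
  ring

lemma tendsto_expansionOrder_mul_log_div_self (ha₀ : 0 < a₀) :
    Tendsto (fun L => expansionOrder a₀ L * log (expansionOrder a₀ L) / L) atTop (𝓝 a₀) := by
  have h := (tendsto_expansionOrder_mul_logBracket_div_self ha₀).mul
    (tendsto_log_expansionOrder_div_logBracket ha₀)
  rw [mul_one] at h
  refine h.congr' ?_
  filter_upwards [eventually_logBracket_pos] with L hM
  field_simp

lemma tendsto_expansionOrder_div_self (ha₀ : 0 < a₀) :
    Tendsto (fun L => (expansionOrder a₀ L : ℝ) / L) atTop (𝓝 0) := by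
  have h := (tendsto_expansionOrder_mul_logBracket_div_self ha₀).mul
    tendsto_logBracket_atTop.inv_tendsto_atTop
  rw [mul_zero] at h
  refine h.congr' ?_
  filter_upwards [eventually_logBracket_pos] with L hM
  rw [Pi.inv_apply]
  field_simp

lemma tendsto_log_expansionOrder_div_self (ha₀ : 0 < a₀) :
    Tendsto (fun L => log (expansionOrder a₀ L) / L) atTop (𝓝 0) := by
  have h := (tendsto_log_expansionOrder_div_logBracket ha₀).mul tendsto_logBracket_div_self
  rw [one_mul] at h
  refine h.congr' ?_
  filter_upwards [eventually_logBracket_pos] with L hM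
  field_simp

end expansionOrder

lemma tendsto_atBot_of_tendsto_div_self {g : ℝ → ℝ} {a : ℝ} (ha : a < 0)
    (hg : Tendsto (fun x => g x / x) atTop (𝓝 a)) : Tendsto g atTop atBot := by
  refine (hg.neg_mul_atTop ha tendsto_id).congr' ?_
  filter_upwards [eventually_ne_atTop 0] with x hx
  exact div_mul_cancel₀ _ hx

lemma factorial_pow_le_exp (m k : ℕ) : (m ! : ℝ) ^ k ≤ exp (k * (m * log m)) := by
  have hpow : (m : ℝ) ^ m = exp (m * log m) := by
    rcases m.eq_zero_or_pos with rfl | hm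
    · simp
    · rw [← log_pow, exp_log (by positivity)]
  rw [exp_nat_mul, ← hpow]
  gcongr
  exact_mod_cast m.factorial_le_pow

noncomputable def logMajorant (a₀ c c' : ℝ) (n₁ n₂ n₃ : ℕ) (p₁ p₂ L : ℝ) : ℝ :=
  expansionOrder a₀ L * log c - p₁ * L
    + (p₂ * expansionOrder a₀ L + c') * log (expansionOrder a₀ L)
    + n₂ * (n₁ * expansionOrder a₀ L * log (n₁ * expansionOrder a₀ L))
    + (n₃ * expansionOrder a₀ L + c') * logBracket L

lemma tendsto_logMajorant_div_self {a₀ : ℝ} (ha₀ : 0 < a₀) (c c' : ℝ) {n₁ : ℕ} (hn₁ : 0 < n₁)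
    (n₂ n₃ : ℕ) (p₁ p₂ : ℝ) :
    Tendsto (fun L => logMajorant a₀ c c' n₁ n₂ n₃ p₁ p₂ L / L) atTop
      (𝓝 (-(p₁ - a₀ * (p₂ + (n₁ : ℝ) * n₂ + n₃)))) := by
  have hN := tendsto_expansionOrder_div_self ha₀
  have hNlogN := tendsto_expansionOrder_mul_log_div_self ha₀
  have h := (((((((hN.const_mul (log c)).sub_const p₁).add (hNlogN.const_mul p₂)).add
    ((tendsto_log_expansionOrder_div_self ha₀).const_mul c')).add
    (hN.const_mul (n₂ * n₁ * log n₁))).add (hNlogN.const_mul ((n₂ : ℝ) * n₁))).add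
    ((tendsto_expansionOrder_mul_logBracket_div_self ha₀).const_mul (n₃ : ℝ))).add
    (tendsto_logBracket_div_self.const_mul c')
  convert h.congr' ?_ using 2
  · ring
  filter_upwards [eventually_gt_atTop 0] with L hL
  have hN := expansionOrder_pos a₀ L
  rw [logMajorant, log_mul (by positivity) hN.ne']
  field_simp
  ring

section expansionParameter

variable {a₀ c c' : ℝ} {n₁ n₂ n₃ : ℕ} {p₁ p₂ : ℝ}

lemma expansionParameter_le_exp_logMajorant (hc : 0 < c) (L : ℝ) :
    c ^ expansionOrder a₀ L * exp (-(p₁ * L))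
        * (expansionOrder a₀ L : ℝ) ^ (p₂ * expansionOrder a₀ L + c')
        * ((n₁ * expansionOrder a₀ L)! : ℝ) ^ n₂
        * √(1 + L ^ 2) ^ ((n₃ : ℝ) * expansionOrder a₀ L + c')
      ≤ exp (logMajorant a₀ c c' n₁ n₂ n₃ p₁ p₂ L) := by
  rw [logMajorant]
  set N := expansionOrder a₀ L
  have hN : (0 : ℝ) < N := expansionOrder_pos a₀ L
  have hcN : c ^ N = exp (N * log c) := by rw [exp_nat_mul, exp_log hc]
  have hNN : (N : ℝ) ^ (p₂ * N + c') = exp ((p₂ * N + c') * log N) := by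
    rw [rpow_def_of_pos hN, mul_comm]
  have hbr : √(1 + L ^ 2) ^ ((n₃ : ℝ) * N + c') = exp ((n₃ * N + c') * logBracket L) := by
    rw [rpow_def_of_pos (by positivity), logBracket, mul_comm]
  have hfact := factorial_pow_le_exp (n₁ * N) n₂
  push_cast at hfact
  calc _ = exp (N * log c - p₁ * L + (p₂ * N + c') * log N + (n₃ * N + c') * logBracket L)
          * ((n₁ * N)! : ℝ) ^ n₂ := by
        rw [hcN, hNN, hbr]
        simp only [exp_add, exp_sub, exp_neg]
        ring
    _ ≤ _ * exp (n₂ * (n₁ * N * log (n₁ * N))) := by gcongr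
    _ = _ := by
      rw [← exp_add]
      ring_nf

theorem tendsto_expansionParameter_atTop (ha₀ : 0 < a₀) (hc : 0 < c) (hn₁ : 0 < n₁)
    (hp : 0 < p₁ - a₀ * (p₂ + (n₁ : ℝ) * n₂ + n₃)) :
    Tendsto (fun L => c ^ expansionOrder a₀ L * exp (-(p₁ * L))
        * (expansionOrder a₀ L : ℝ) ^ (p₂ * expansionOrder a₀ L + c')
        * ((n₁ * expansionOrder a₀ L)! : ℝ) ^ n₂
        * √(1 + L ^ 2) ^ ((n₃ : ℝ) * expansionOrder a₀ L + c')) atTop (𝓝 0) := by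
  have hU := tendsto_atBot_of_tendsto_div_self (neg_lt_zero.2 hp)
    (tendsto_logMajorant_div_self ha₀ c c' hn₁ n₂ n₃ p₁ p₂)
  refine tendsto_of_tendsto_of_tendsto_of_le_of_le tendsto_const_nhds
    (tendsto_exp_atBot.comp hU) (fun L => ?_) (expansionParameter_le_exp_logMajorant hc)
  have := expansionOrder_pos a₀ L
  positivity

end expansionParameter

theorem expansion_parameter_decay_general
    (a₀ : ℝ) (ha₀ : 0 < a₀) (c c' : ℝ) (hc : 0 < c)
    (n₁ n₂ n₃ : ℕ) (hn₁ : 0 < n₁)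
    (p₁ p₂ : ℝ) (hp : 0 < p₁ - a₀ * (p₂ + (n₁ : ℝ) * n₂ + n₃)) :
    Tendsto (fun lam : ℝ =>
        (letI N₀ : ℕ := max 1 ⌊a₀ * |Real.log lam| /
            Real.log (Real.sqrt (1 + Real.log lam ^ 2))⌋₊
        c ^ N₀ * lam ^ p₁ * (N₀ : ℝ) ^ (p₂ * N₀ + c')
          * ((Nat.factorial (n₁ * N₀) : ℝ)) ^ n₂
          * Real.sqrt (1 + Real.log lam ^ 2) ^ ((n₃ : ℝ) * N₀ + c')))
      (nhdsWithin 0 (Set.Ioi 0)) (nhds 0) := by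
  have hL : Tendsto (fun lam : ℝ => -log lam) (𝓝[>] 0) atTop :=
    tendsto_neg_atBot_atTop.comp tendsto_log_nhdsGT_zero
  refine ((tendsto_expansionParameter_atTop (c' := c') ha₀ hc hn₁ hp).comp hL).congr' ?_
  filter_upwards [Ioo_mem_nhdsGT one_pos] with lam ⟨hlam₀, hlam₁⟩
  have habs : |log lam| = -log lam := abs_of_neg (log_neg hlam₀ hlam₁)
  have hpow : lam ^ p₁ = exp (-(p₁ * -log lam)) := by
    rw [rpow_def_of_pos hlam₀, mul_neg, neg_neg, mul_comm]
  simp only [Function.comp_apply, expansionOrder, logBracket, neg_sq, habs, hpow]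

/-- Decay of the expansion parameters (equation (5.4) of the paper).  With
`N₀(λ) = max(1, ⌊a₀|ln λ|/ln⟨ln λ⟩⌋)` and constants `c, c' > 0`, `n₁, n₂, n₃ ∈ ℕ₊`,
`p₁, p₂ ∈ ℝ` satisfying `p₁ - a₀(p₂ + n₁n₂ + n₃) > 0`, one has
`c^{N₀(λ)} λ^{p₁} N₀(λ)^{p₂N₀(λ)+c'} ((n₁N₀(λ))!)^{n₂} ⟨ln λ⟩^{n₃N₀(λ)+c'} → 0`
as `λ → 0⁺`. -/
theorem expansion_parameter_decay
    (a₀ : ℝ) (ha₀ : 0 < a₀) (c c' : ℝ) (hc : 0 < c) (hc' : 0 < c')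
    (n₁ n₂ n₃ : ℕ) (hn₁ : 0 < n₁) (hn₂ : 0 < n₂) (hn₃ : 0 < n₃)
    (p₁ p₂ : ℝ) (hp : 0 < p₁ - a₀ * (p₂ + (n₁ : ℝ) * n₂ + n₃)) :
    Tendsto (fun lam : ℝ =>
        (letI N₀ : ℕ := max 1 ⌊a₀ * |Real.log lam| /
            Real.log (Real.sqrt (1 + Real.log lam ^ 2))⌋₊
        c ^ N₀ * lam ^ p₁ * (N₀ : ℝ) ^ (p₂ * N₀ + c')
          * ((Nat.factorial (n₁ * N₀) : ℝ)) ^ n₂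
          * Real.sqrt (1 + Real.log lam ^ 2) ^ ((n₃ : ℝ) * N₀ + c')))
      (nhdsWithin 0 (Set.Ioi 0)) (nhds 0) :=
  expansion_parameter_decay_general a₀ ha₀ c c' hc n₁ n₂ n₃ hn₁ p₁ p₂ hp
end

section
/- Let M ≥ 0 and let T ∈ (ℝ₊)^M, s > 0, α ∈ ℝ with |α| ≤ s, and δ ∈ (0,1). Then ∫_{(ℝ₊)^M} dt 𝟙(Σ_{i=1}^M t_i ≤ s) ⟨Σ_{i=1}^M t_i + α⟩^{-1-δ} ≤ ∫_0^s dT T^{M-1}/(M-1)! · ⟨T+α⟩^{-1-δ} for M ≥ 1, and moreover for M ≥ 2, ∫_0^s dT T^{M-1} ⟨T+α⟩^{-1-δ} ≤ s^{M-2} ( ∫_0^s dT ⟨T+α⟩^{-δ} + |α| ∫_0^s dT ⟨T+α⟩^{-1-δ} ) ≤ C s^{M-2}(s^{1-δ'} + |α|) for δ' = min(δ, 1/2) and a constant C depending only on δ. -/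
/-!
Peeling off one time variable by Fubini turns the simplex integral of `g (∑ tᵢ)` in dimension
`n + 1` into the simplex integral in dimension `n` of the tail integral `∫_{∑ tᵢ}^s g`; an
integration by parts against `Tⁿ / n!` then closes the induction, so the first bound is in fact
an equality (Cauchy's formula for repeated integration).

The second bound is pointwise: `T ≤ ⟨T + α⟩ + |α|` trades one power of `T` for one power of the
bracket. For the third, `|α| ≤ s` puts `[α, α + s]` inside `[-2s, 2s]`, on which
`⟨u⟩^{-δ} ≤ |u|^{-δ'}` integrates to `O(s^{1-δ'})`, while `⟨u⟩^{-1-δ}` is integrable on all of `ℝ`.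
-/

open MeasureTheory intervalIntegral Set Finset
open scoped Nat

noncomputable def japaneseBracket (x : ℝ) : ℝ := √(1 + x ^ 2)

lemma one_le_japaneseBracket (x : ℝ) : 1 ≤ japaneseBracket x :=
  Real.one_le_sqrt.mpr (le_add_of_nonneg_right (sq_nonneg x))

lemma japaneseBracket_pos (x : ℝ) : 0 < japaneseBracket x :=
  one_pos.trans_le (one_le_japaneseBracket x)

lemma abs_le_japaneseBracket (x : ℝ) : |x| ≤ japaneseBracket x := by
  rw [← Real.sqrt_sq_eq_abs]
  exact Real.sqrt_le_sqrt (le_add_of_nonneg_left zero_le_one)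

lemma japaneseBracket_neg (x : ℝ) : japaneseBracket (-x) = japaneseBracket x := by
  simp [japaneseBracket]

lemma continuous_japaneseBracket_rpow (p : ℝ) : Continuous fun x => japaneseBracket x ^ p :=
  (by unfold japaneseBracket; fun_prop : Continuous japaneseBracket).rpow_const
    fun x => Or.inl (japaneseBracket_pos x).ne'

lemma japaneseBracket_rpow_neg_le_rpow_neg {p q u : ℝ} (hq : 0 ≤ q) (hqp : q ≤ p) (hu : 0 < u) :
    japaneseBracket u ^ (-p) ≤ u ^ (-q) :=
  calc japaneseBracket u ^ (-p) ≤ japaneseBracket u ^ (-q) :=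
        Real.rpow_le_rpow_of_exponent_le (one_le_japaneseBracket u) (neg_le_neg hqp)
    _ ≤ u ^ (-q) := Real.rpow_le_rpow_of_nonpos hu
        ((le_abs_self u).trans (abs_le_japaneseBracket u)) (neg_nonpos.mpr hq)

lemma integrable_japaneseBracket_rpow_neg {p : ℝ} (hp : 1 < p) :
    Integrable fun x => japaneseBracket x ^ (-p) := by
  refine (integrable_rpow_neg_one_add_norm_sq (E := ℝ) (μ := volume) (r := p) (by simpa)).congr
    (ae_of_all _ fun x => ?_)
  simp only [japaneseBracket]
  rw [Real.sqrt_eq_rpow, ← Real.rpow_mul (by positivity), Real.norm_eq_abs, sq_abs]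
  ring_nf

lemma mul_japaneseBracket_rpow_le (p T α : ℝ) :
    T * japaneseBracket (T + α) ^ (-(1 + p)) ≤
      japaneseBracket (T + α) ^ (-p) + |α| * japaneseBracket (T + α) ^ (-(1 + p)) := by
  have hpos := japaneseBracket_pos (T + α)
  have hT : T ≤ japaneseBracket (T + α) + |α| := by
    linarith [le_abs_self (T + α), abs_le_japaneseBracket (T + α), neg_abs_le α]
  calc T * japaneseBracket (T + α) ^ (-(1 + p))
      ≤ (japaneseBracket (T + α) + |α|) * japaneseBracket (T + α) ^ (-(1 + p)) := by gcongr
    _ = _ := by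
      rw [add_mul, mul_comm _ (japaneseBracket _ ^ _), ← Real.rpow_add_one hpos.ne']
      ring_nf

def cornerSimplex (M : ℕ) (s : ℝ) : Set (Fin M → ℝ) := {t | (∀ i, 0 ≤ t i) ∧ ∑ i, t i ≤ s}

lemma isCompact_cornerSimplex (M : ℕ) (s : ℝ) : IsCompact (cornerSimplex M s) := by
  refine (isCompact_Icc (a := (0 : Fin M → ℝ)) (b := fun _ => s)).of_isClosed_subset ?_ ?_
  · rw [cornerSimplex, ofPred_and, ofPred_forall]
    exact (isClosed_iInter fun i => isClosed_le continuous_const (continuous_apply i)).inter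
      (isClosed_le (continuous_finsetSum _ fun i _ => continuous_apply i) continuous_const)
  · rintro t ⟨ht, hts⟩
    exact ⟨ht, fun i => (single_le_sum (fun j _ => ht j) (mem_univ i)).trans hts⟩

lemma measurableSet_cornerSimplex (M : ℕ) (s : ℝ) : MeasurableSet (cornerSimplex M s) :=
  (isCompact_cornerSimplex M s).isClosed.measurableSet

lemma cornerSimplex_zero {s : ℝ} (hs : 0 ≤ s) : cornerSimplex 0 s = univ := by
  ext t
  simp [cornerSimplex, hs]

lemma cons_mem_cornerSimplex_iff {n : ℕ} {s x : ℝ} {t : Fin n → ℝ} :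
    Fin.cons x t ∈ cornerSimplex (n + 1) s ↔
      t ∈ cornerSimplex n s ∧ x ∈ Icc 0 (s - ∑ i, t i) := by
  simp only [cornerSimplex, mem_ofPred_eq, Fin.forall_fin_succ, Fin.cons_zero, Fin.cons_succ,
    Fin.sum_cons, Set.mem_Icc]
  constructor
  · rintro ⟨⟨hx, ht⟩, hxt⟩
    exact ⟨⟨ht, by linarith⟩, hx, by linarith⟩
  · rintro ⟨⟨ht, -⟩, hx, hxt⟩
    exact ⟨⟨hx, ht⟩, by linarith⟩

lemma integral_cornerSimplex_succ {n : ℕ} {g : ℝ → ℝ} (hg : Continuous g) (s : ℝ) :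
    ∫ t in cornerSimplex (n + 1) s, g (∑ i, t i) =
      ∫ t in cornerSimplex n s, ∫ u in (∑ i, t i)..s, g u := by
  set e := MeasurableEquiv.piFinSuccAbove (fun _ : Fin (n + 1) => ℝ) 0
  have he : MeasurePreserving e.symm :=
    (volume_preserving_piFinSuccAbove (fun _ : Fin (n + 1) => ℝ) 0).symm
  have he_apply (x : ℝ) (t : Fin n → ℝ) : e.symm (x, t) = Fin.cons x t := by
    simp [e, MeasurableEquiv.piFinSuccAbove_symm_apply, Fin.insertNthEquiv]
  set F := (cornerSimplex (n + 1) s).indicator fun t => g (∑ i, t i)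
  have hF : Integrable F := (integrable_indicator_iff (measurableSet_cornerSimplex _ _)).mpr <|
    (hg.comp (continuous_finsetSum _ fun i _ => continuous_apply i)).continuousOn
      |>.integrableOn_compact (isCompact_cornerSimplex _ _)
  have hslice (x : ℝ) (t : Fin n → ℝ) : F (e.symm (x, t)) = (cornerSimplex n s).indicator
      (fun t => (Icc 0 (s - ∑ i, t i)).indicator (fun x => g (x + ∑ i, t i)) x) t := by
    classical
    simp only [F, he_apply, Set.indicator_apply, cons_mem_cornerSimplex_iff, Fin.sum_cons, ite_and]
  have hfiber (t : Fin n → ℝ) : ∫ x, F (e.symm (x, t)) =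
      (cornerSimplex n s).indicator (fun t => ∫ u in (∑ i, t i)..s, g u) t := by
    simp only [hslice]
    by_cases ht : t ∈ cornerSimplex n s
    · simp only [indicator_of_mem ht]
      rw [MeasureTheory.integral_indicator measurableSet_Icc, integral_Icc_eq_integral_Ioc,
        ← integral_of_le (by linarith [ht.2]), integral_comp_add_right, zero_add, sub_add_cancel]
    · simp [ht]
  calc ∫ t in cornerSimplex (n + 1) s, g (∑ i, t i)
      = ∫ t, F t := (MeasureTheory.integral_indicator (measurableSet_cornerSimplex _ _)).symm
    _ = ∫ p, F (e.symm p) := (he.integral_comp' F).symm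
    _ = ∫ t, ∫ x, F (e.symm (x, t)) := by
      rw [Measure.volume_eq_prod]
      exact integral_prod_symm _ ((he.integrable_comp_emb e.symm.measurableEmbedding).mpr hF)
    _ = ∫ t in cornerSimplex n s, ∫ u in (∑ i, t i)..s, g u := by
      simp_rw [hfiber]
      exact MeasureTheory.integral_indicator (measurableSet_cornerSimplex _ _)

lemma hasDerivAt_integral_left {g : ℝ → ℝ} (hg : Continuous g) (s T : ℝ) :
    HasDerivAt (fun y => ∫ u in y..s, g u) (-g T) T :=
  integral_hasDerivAt_left (hg.intervalIntegrable _ _) (hg.stronglyMeasurableAtFilter _ _)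
    hg.continuousAt

lemma integral_pow_div_factorial_mul_integral (n : ℕ) {g : ℝ → ℝ} (hg : Continuous g) (s : ℝ) :
    ∫ T in 0..s, T ^ n / n ! * ∫ u in T..s, g u = ∫ T in 0..s, T ^ (n + 1) / (n + 1)! * g T := by
  have hpow (T : ℝ) : HasDerivAt (fun T : ℝ => T ^ (n + 1) / (n + 1)!) (T ^ n / n !) T := by
    refine ((hasDerivAt_pow (n + 1) T).div_const _).congr_deriv ?_
    push_cast [Nat.factorial_succ, Nat.add_sub_cancel]
    field_simp
  have hparts := intervalIntegral.integral_mul_deriv_eq_deriv_mul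
    (fun T _ => hasDerivAt_integral_left hg s T) (fun T _ => hpow T)
    (hg.neg.intervalIntegrable 0 s)
    ((by fun_prop : Continuous fun T : ℝ => T ^ n / n !).intervalIntegrable 0 s)
  simpa [mul_comm] using hparts

theorem integral_cornerSimplex_eq (n : ℕ) {g : ℝ → ℝ} (hg : Continuous g) {s : ℝ} (hs : 0 ≤ s) :
    ∫ t in cornerSimplex (n + 1) s, g (∑ i, t i) = ∫ T in 0..s, T ^ n / n ! * g T := by
  induction n generalizing g with
  | zero =>
    rw [integral_cornerSimplex_succ hg, cornerSimplex_zero hs]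
    simp [Measure.real, volume_pi]
  | succ n ih =>
    have htail : Continuous fun y => ∫ u in y..s, g u :=
      continuous_iff_continuousAt.mpr fun T => (hasDerivAt_integral_left hg s T).continuousAt
    rw [integral_cornerSimplex_succ hg, ih htail, integral_pow_div_factorial_mul_integral n hg]

lemma integral_pow_succ_mul_japaneseBracket_rpow_le (m : ℕ) (p α : ℝ) {s : ℝ} (hs : 0 ≤ s) :
    ∫ T in 0..s, T ^ (m + 1) * japaneseBracket (T + α) ^ (-(1 + p)) ≤
      s ^ m * ((∫ T in 0..s, japaneseBracket (T + α) ^ (-p)) +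
        |α| * ∫ T in 0..s, japaneseBracket (T + α) ^ (-(1 + p))) := by
  have hk (q : ℝ) : Continuous fun T => japaneseBracket (T + α) ^ q :=
    (continuous_japaneseBracket_rpow q).comp (continuous_add_const α)
  calc ∫ T in 0..s, T ^ (m + 1) * japaneseBracket (T + α) ^ (-(1 + p))
      ≤ ∫ T in 0..s, s ^ m * (japaneseBracket (T + α) ^ (-p) +
          |α| * japaneseBracket (T + α) ^ (-(1 + p))) := by
        refine integral_mono_on hs ((by fun_prop : Continuous _).intervalIntegrable _ _)
          ((by fun_prop : Continuous _).intervalIntegrable _ _) fun T hT => ?_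
        calc T ^ (m + 1) * japaneseBracket (T + α) ^ (-(1 + p))
            ≤ s ^ m * T * japaneseBracket (T + α) ^ (-(1 + p)) := by
              rw [pow_succ]
              exact mul_le_mul_of_nonneg_right (mul_le_mul_of_nonneg_right
                (pow_le_pow_left₀ hT.1 hT.2 m) hT.1) (Real.rpow_nonneg (japaneseBracket_pos _).le _)
          _ = s ^ m * (T * japaneseBracket (T + α) ^ (-(1 + p))) := mul_assoc _ _ _
          _ ≤ _ := by gcongr; exact mul_japaneseBracket_rpow_le p T α
    _ = _ := by
      rw [intervalIntegral.integral_const_mul, integral_add ((hk _).intervalIntegrable _ _)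
        (((hk _).const_mul _).intervalIntegrable _ _), intervalIntegral.integral_const_mul]

lemma integral_comp_add_le_two_mul_integral {f : ℝ → ℝ} (hf : Continuous f)
    (hf0 : ∀ x, 0 ≤ f x) (heven : ∀ x, f (-x) = f x) {s α : ℝ} (hα : |α| ≤ s) :
    ∫ T in 0..s, f (T + α) ≤ 2 * ∫ u in 0..2 * s, f u := by
  obtain ⟨hαl, hαr⟩ := abs_le.mp hα
  have hsymm : ∫ u in -(2 * s)..2 * s, f u = 2 * ∫ u in 0..2 * s, f u := by
    have hneg := integral_comp_neg (a := 0) (b := 2 * s) f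
    simp only [heven, neg_zero] at hneg
    rw [← integral_add_adjacent_intervals (b := 0) (hf.intervalIntegrable _ _)
      (hf.intervalIntegrable _ _), ← hneg]
    ring
  calc ∫ T in 0..s, f (T + α) = ∫ u in α..s + α, f u := by rw [integral_comp_add_right, zero_add]
    _ ≤ ∫ u in -(2 * s)..2 * s, f u :=
      integral_mono_interval (by linarith) (by linarith) (by linarith) (ae_of_all _ hf0)
        (hf.intervalIntegrable _ _)
    _ = 2 * ∫ u in 0..2 * s, f u := hsymm

lemma integral_japaneseBracket_rpow_neg_le {p q b : ℝ} (hq0 : 0 ≤ q) (hq1 : q < 1) (hqp : q ≤ p)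
    (hb : 0 ≤ b) : ∫ u in 0..b, japaneseBracket u ^ (-p) ≤ b ^ (1 - q) / (1 - q) := by
  calc ∫ u in 0..b, japaneseBracket u ^ (-p) ≤ ∫ u in 0..b, u ^ (-q) :=
        integral_mono_on_of_le_Ioo hb ((continuous_japaneseBracket_rpow _).intervalIntegrable _ _)
          (intervalIntegral.intervalIntegrable_rpow' (by linarith))
          fun u hu => japaneseBracket_rpow_neg_le_rpow_neg hq0 hqp hu.1
    _ = b ^ (1 - q) / (1 - q) := by
      rw [integral_rpow (Or.inl (by linarith)), Real.zero_rpow (by linarith), sub_zero,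
        neg_add_eq_sub]

lemma integral_japaneseBracket_add_rpow_neg_le {p q s α : ℝ} (hq0 : 0 ≤ q) (hq : q ≤ 1 / 2)
    (hqp : q ≤ p) (hα : |α| ≤ s) :
    ∫ T in 0..s, japaneseBracket (T + α) ^ (-p) ≤ 8 * s ^ (1 - q) := by
  have hs : 0 ≤ s := (abs_nonneg α).trans hα
  have htwo : (2 : ℝ) ^ (1 - q) ≤ 2 := by
    simpa using Real.rpow_le_rpow_of_exponent_le one_le_two (by linarith : 1 - q ≤ 1)
  have hsq : 0 ≤ s ^ (1 - q) := Real.rpow_nonneg hs _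
  calc ∫ T in 0..s, japaneseBracket (T + α) ^ (-p)
      ≤ 2 * ∫ u in 0..2 * s, japaneseBracket u ^ (-p) :=
        integral_comp_add_le_two_mul_integral (continuous_japaneseBracket_rpow _)
          (fun x => Real.rpow_nonneg (japaneseBracket_pos x).le _)
          (fun x => by rw [japaneseBracket_neg]) hα
    _ ≤ 2 * ((2 * s) ^ (1 - q) / (1 - q)) := by
        gcongr
        exact integral_japaneseBracket_rpow_neg_le hq0 (by linarith) hqp (by linarith)
    _ ≤ 8 * s ^ (1 - q) := by
        rw [Real.mul_rpow zero_le_two hs, ← mul_div_assoc, div_le_iff₀ (by linarith)]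
        nlinarith [mul_le_mul_of_nonneg_right htwo hsq]

lemma integral_japaneseBracket_add_rpow_neg_le_integral {p s : ℝ} (hp : 1 < p) (hs : 0 ≤ s)
    (α : ℝ) : ∫ T in 0..s, japaneseBracket (T + α) ^ (-p) ≤ ∫ u, japaneseBracket u ^ (-p) := by
  rw [integral_comp_add_right (fun u => japaneseBracket u ^ (-p)), zero_add,
    integral_of_le (by linarith)]
  exact setIntegral_le_integral (integrable_japaneseBracket_rpow_neg hp)
    (ae_of_all _ fun u => Real.rpow_nonneg (japaneseBracket_pos u).le _)

theorem nested_time_integral_estimate_general (δ : ℝ) (hδ0 : 0 < δ) :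
    ∃ C : ℝ, 0 < C ∧ ∀ (M : ℕ) (s α : ℝ), 0 < s → |α| ≤ s →
      (1 ≤ M →
        (∫ t in {t : Fin M → ℝ | (∀ i, 0 ≤ t i) ∧ ∑ i, t i ≤ s},
            Real.sqrt (1 + (∑ i, t i + α) ^ 2) ^ (-(1 + δ)))
          ≤ ∫ T in (0:ℝ)..s,
              T ^ (M - 1) / Nat.factorial (M - 1) *
                Real.sqrt (1 + (T + α) ^ 2) ^ (-(1 + δ)))
      ∧ (2 ≤ M →
        (∫ T in (0:ℝ)..s, T ^ (M - 1) * Real.sqrt (1 + (T + α) ^ 2) ^ (-(1 + δ)))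
          ≤ s ^ (M - 2) *
              ((∫ T in (0:ℝ)..s, Real.sqrt (1 + (T + α) ^ 2) ^ (-δ))
                + |α| * ∫ T in (0:ℝ)..s, Real.sqrt (1 + (T + α) ^ 2) ^ (-(1 + δ))))
      ∧ (2 ≤ M →
        s ^ (M - 2) *
            ((∫ T in (0:ℝ)..s, Real.sqrt (1 + (T + α) ^ 2) ^ (-δ))
              + |α| * ∫ T in (0:ℝ)..s, Real.sqrt (1 + (T + α) ^ 2) ^ (-(1 + δ)))
          ≤ C * s ^ (M - 2) * (s ^ (1 - min δ (1/2)) + |α|)) := by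
  set I := ∫ u, japaneseBracket u ^ (-(1 + δ))
  have hI : 0 ≤ I := integral_nonneg fun u => Real.rpow_nonneg (japaneseBracket_pos u).le _
  refine ⟨8 + I, by positivity, fun M s α hs hα => ⟨fun hM => ?_, fun hM => ?_, fun hM => ?_⟩⟩
  · obtain ⟨n, rfl⟩ := Nat.exists_eq_add_of_le' hM
    exact (integral_cornerSimplex_eq n
      ((continuous_japaneseBracket_rpow _).comp (continuous_add_const α)) hs.le).le
  · obtain ⟨m, rfl⟩ := Nat.exists_eq_add_of_le' hM
    exact integral_pow_succ_mul_japaneseBracket_rpow_le m δ α hs.le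
  · have hA := integral_japaneseBracket_add_rpow_neg_le (le_min hδ0.le (by norm_num))
      (min_le_right δ (1 / 2)) (min_le_left δ (1 / 2)) hα
    have hB := integral_japaneseBracket_add_rpow_neg_le_integral (p := 1 + δ) (by linarith)
      hs.le α
    have hpow : 0 ≤ s ^ (M - 2) := pow_nonneg hs.le _
    have hsq : 0 ≤ s ^ (1 - min δ (1 / 2)) := Real.rpow_nonneg hs.le _
    calc _ ≤ s ^ (M - 2) * (8 * s ^ (1 - min δ (1 / 2)) + |α| * I) := by
          gcongr
          exacts [hA, hB]
      _ ≤ (8 + I) * s ^ (M - 2) * (s ^ (1 - min δ (1 / 2)) + |α|) := by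
          nlinarith [mul_nonneg hpow (mul_nonneg hI hsq), mul_nonneg hpow (abs_nonneg α)]

/-- Iterated time-integral estimate for nested graphs.  For `δ ∈ (0,1)` there is a
constant `C > 0` depending only on `δ` such that for all `M`, `s > 0`, `|α| ≤ s`:
(i) for `M ≥ 1`, the simplex integral of `⟨∑ t_i + α⟩^{-1-δ}` over
`{t ∈ (ℝ₊)^M : ∑ t_i ≤ s}` is at most `∫_0^s T^{M-1}/(M-1)! ⟨T+α⟩^{-1-δ} dT`;
(ii) for `M ≥ 2`,
`∫_0^s T^{M-1}⟨T+α⟩^{-1-δ} dT ≤ s^{M-2}(∫_0^s ⟨T+α⟩^{-δ} dT + |α|∫_0^s ⟨T+α⟩^{-1-δ} dT)`;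
(iii) for `M ≥ 2`, the latter is at most `C s^{M-2}(s^{1-δ'} + |α|)` with
`δ' = min(δ, 1/2)`.  Here `⟨x⟩ = √(1+x²)`. -/
theorem nested_time_integral_estimate (δ : ℝ) (hδ0 : 0 < δ) (hδ1 : δ < 1) :
    ∃ C : ℝ, 0 < C ∧ ∀ (M : ℕ) (s α : ℝ), 0 < s → |α| ≤ s →
      (1 ≤ M →
        (∫ t in {t : Fin M → ℝ | (∀ i, 0 ≤ t i) ∧ ∑ i, t i ≤ s},
            Real.sqrt (1 + (∑ i, t i + α) ^ 2) ^ (-(1 + δ)))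
          ≤ ∫ T in (0:ℝ)..s,
              T ^ (M - 1) / Nat.factorial (M - 1) *
                Real.sqrt (1 + (T + α) ^ 2) ^ (-(1 + δ)))
      ∧ (2 ≤ M →
        (∫ T in (0:ℝ)..s, T ^ (M - 1) * Real.sqrt (1 + (T + α) ^ 2) ^ (-(1 + δ)))
          ≤ s ^ (M - 2) *
              ((∫ T in (0:ℝ)..s, Real.sqrt (1 + (T + α) ^ 2) ^ (-δ))
                + |α| * ∫ T in (0:ℝ)..s, Real.sqrt (1 + (T + α) ^ 2) ^ (-(1 + δ))))
      ∧ (2 ≤ M →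
        s ^ (M - 2) *
            ((∫ T in (0:ℝ)..s, Real.sqrt (1 + (T + α) ^ 2) ^ (-δ))
              + |α| * ∫ T in (0:ℝ)..s, Real.sqrt (1 + (T + α) ^ 2) ^ (-(1 + δ)))
          ≤ C * s ^ (M - 2) * (s ^ (1 - min δ (1/2)) + |α|)) :=
  nested_time_integral_estimate_general δ hδ0
end
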